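/- arXiv:q-alg/9608016 — 2 statements merged into one kernel-verified Lean document; each statement's English description precedes it below -/
import Mathlib

section
/- Let G be a finite group and let L ⊆ K = { f : G → ℂ | f(1) = 0 } be a nonzero subspace invariant under T_h for all h ∈ G and minimal with these properties (every nonzero T-invariant subspace contained in L equals L). Then there exist a nontrivial irreducible finite-dimensional complex representation ρ : G → GL(V) and a nonzero λ ∈ V* such that L = L_{V,ρ,λ}. -/
/-!
The operators `T_h` compose as `T_h T_k = T_{hk}` on all of `ℂ(G)`, and `T_1` fixes every `f` with
`f 1 = 0`, so they restrict to a representation of `G` on `L`. For the functional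
`λ f = -(1/|G|) ∑ₓ f x`, reindexing the sum gives `λ (T_g f) - λ f = f g`: every `f ∈ L` is its
own `f_f`, hence `L = L_{L,T,λ}`. Invariant subspaces of this representation are `T`-invariant
subspaces of `L`, so minimality is irreducibility, and `L ≠ 0` rules out a trivial `ρ` or `λ = 0`.
Transporting along a basis of `L` puts the representation on `Fin n → ℂ`.
-/

noncomputable section

variable {G : Type*} [Group G] [Fintype G]

/-- The operator `T_h` on functions `G → ℂ`: `(T_h f)(g) = f(gh) - f(h)`. -/
def Tw (G : Type*) [Group G] (h : G) : (G → ℂ) →ₗ[ℂ] (G → ℂ) :=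
  LinearMap.pi fun g => (LinearMap.proj (g * h) : (G → ℂ) →ₗ[ℂ] ℂ) -
    (LinearMap.proj h : (G → ℂ) →ₗ[ℂ] ℂ)

/-- The linear map `v ↦ f_v`, where `f_v(g) = λ(ρ(g)v) - λ(v)`. -/
def Fmap {V : Type*} [AddCommGroup V] [Module ℂ V]
    (ρ : Representation ℂ G V) (lam : V →ₗ[ℂ] ℂ) : V →ₗ[ℂ] (G → ℂ) :=
  LinearMap.pi fun g => lam ∘ₗ ρ g - lam

section Group

variable {G : Type*} [Group G]

@[simp]
lemma Tw_apply (h : G) (f : G → ℂ) (g : G) : Tw G h f g = f (g * h) - f h := rfl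

lemma Tw_mul (h k : G) : Tw G (h * k) = Tw G h * Tw G k := by
  ext f g
  simp [mul_assoc]

lemma Tw_one_apply {f : G → ℂ} (hf : f 1 = 0) : Tw G 1 f = f := by
  ext g
  simp [hf]

variable {V W : Type*} [AddCommGroup V] [Module ℂ V] [AddCommGroup W] [Module ℂ W]

@[simp]
lemma Fmap_apply (ρ : Representation ℂ G V) (lam : V →ₗ[ℂ] ℂ) (v : V) (g : G) :
    Fmap ρ lam v g = lam (ρ g v) - lam v := rfl

lemma Fmap_zero_right (ρ : Representation ℂ G V) : Fmap ρ 0 = 0 := by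
  ext v g
  simp

lemma Fmap_eq_zero_of_forall_eq_one {ρ : Representation ℂ G V} (hρ : ∀ g, ρ g = 1)
    (lam : V →ₗ[ℂ] ℂ) : Fmap ρ lam = 0 := by
  ext v g
  simp [hρ]

def Representation.conj (ρ : Representation ℂ G V) (e : V ≃ₗ[ℂ] W) : Representation ℂ G W :=
  (e.conjAlgEquiv ℂ : Module.End ℂ V →* Module.End ℂ W).comp ρ

lemma Representation.conj_apply (ρ : Representation ℂ G V) (e : V ≃ₗ[ℂ] W) (g : G) :
    ρ.conj e g = e.toLinearMap ∘ₗ ρ g ∘ₗ e.symm.toLinearMap := rfl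

lemma Fmap_conj (ρ : Representation ℂ G V) (lam : V →ₗ[ℂ] ℂ) (e : V ≃ₗ[ℂ] W) :
    Fmap (ρ.conj e) (lam ∘ₗ e.symm.toLinearMap) = Fmap ρ lam ∘ₗ e.symm.toLinearMap := by
  ext w g
  simp [Representation.conj_apply]

def Representation.OnlyTrivialInvariantSubmodules (ρ : Representation ℂ G V) : Prop :=
  ∀ U : Submodule ℂ V, (∀ g : G, ∀ v ∈ U, ρ g v ∈ U) → U = ⊥ ∨ U = ⊤

lemma Representation.OnlyTrivialInvariantSubmodules.conj {ρ : Representation ℂ G V}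
    (hρ : ρ.OnlyTrivialInvariantSubmodules) (e : V ≃ₗ[ℂ] W) :
    (ρ.conj e).OnlyTrivialInvariantSubmodules := by
  intro U hU
  have hinv : ∀ g : G, ∀ v ∈ U.map e.symm.toLinearMap, ρ g v ∈ U.map e.symm.toLinearMap := by
    rintro g _ ⟨w, hw, rfl⟩
    refine ⟨ρ.conj e g w, hU g w hw, ?_⟩
    simp [Representation.conj_apply]
  simpa using hρ _ hinv

def twRep (L : Submodule ℂ (G → ℂ)) (hK : ∀ f ∈ L, f 1 = 0)
    (hT : ∀ h : G, ∀ f ∈ L, Tw G h f ∈ L) : Representation ℂ G L where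
  toFun h := (Tw G h).restrict (hT h)
  map_one' := by
    ext f : 2
    exact Tw_one_apply (hK f f.2)
  map_mul' h k := by
    ext f : 2
    simp [Tw_mul]

lemma twRep_apply_coe (L : Submodule ℂ (G → ℂ)) (hK : ∀ f ∈ L, f 1 = 0)
    (hT : ∀ h : G, ∀ f ∈ L, Tw G h f ∈ L) (h : G) (f : L) :
    (twRep L hK hT h f : G → ℂ) = Tw G h f := rfl

lemma twRep_onlyTrivialInvariantSubmodules (L : Submodule ℂ (G → ℂ)) (hK : ∀ f ∈ L, f 1 = 0)
    (hT : ∀ h : G, ∀ f ∈ L, Tw G h f ∈ L)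
    (hmin : ∀ L' : Submodule ℂ (G → ℂ), L' ≤ L → (∀ h : G, ∀ f ∈ L', Tw G h f ∈ L') →
      L' ≠ ⊥ → L' = L) :
    (twRep L hK hT).OnlyTrivialInvariantSubmodules := by
  intro U hU
  refine or_iff_not_imp_left.mpr fun hU0 => ?_
  have hinv : ∀ h : G, ∀ f ∈ U.map L.subtype, Tw G h f ∈ U.map L.subtype := by
    rintro h _ ⟨f, hf, rfl⟩
    exact ⟨_, hU h f hf, twRep_apply_coe L hK hT h f⟩
  have hmap_inj := Submodule.map_injective_of_injective L.injective_subtype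
  have hne : U.map L.subtype ≠ ⊥ := by
    rwa [Ne, ← Submodule.map_bot L.subtype, hmap_inj.eq_iff]
  have hmap := hmin _ (Submodule.map_subtype_le L U) hinv hne
  exact hmap_inj (hmap.trans (Submodule.map_subtype_top L).symm)

end Group

section Fintype

variable (G : Type*) [Fintype G]

def negAvg : (G → ℂ) →ₗ[ℂ] ℂ :=
  -(Fintype.card G : ℂ)⁻¹ • ∑ x, LinearMap.proj x

variable {G}

lemma negAvg_apply (f : G → ℂ) : negAvg G f = -(Fintype.card G : ℂ)⁻¹ * ∑ x, f x := by
  simp [negAvg]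

end Fintype

lemma negAvg_Tw_sub (g : G) (f : G → ℂ) : negAvg G (Tw G g f) - negAvg G f = f g := by
  have hsum : ∑ x, Tw G g f x = ∑ x, f x - Fintype.card G * f g := by
    simp only [Tw_apply, Finset.sum_sub_distrib, Finset.sum_const, Finset.card_univ, nsmul_eq_mul]
    rw [Fintype.sum_equiv (Equiv.mulRight g) (fun x => f (x * g)) f fun _ => rfl]
  have hcard : (Fintype.card G : ℂ) ≠ 0 := Nat.cast_ne_zero.mpr Fintype.card_ne_zero
  rw [negAvg_apply, negAvg_apply, hsum]
  field_simp
  ring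

lemma Fmap_twRep_negAvg (L : Submodule ℂ (G → ℂ)) (hK : ∀ f ∈ L, f 1 = 0)
    (hT : ∀ h : G, ∀ f ∈ L, Tw G h f ∈ L) :
    Fmap (twRep L hK hT) (negAvg G ∘ₗ L.subtype) = L.subtype := by
  ext f g
  exact negAvg_Tw_sub g f

theorem stmt5 (L : Submodule ℂ (G → ℂ))
    (hK : ∀ f ∈ L, f 1 = 0)
    (hT : ∀ h : G, ∀ f ∈ L, Tw G h f ∈ L)
    (hne : L ≠ ⊥)
    (hmin : ∀ L' : Submodule ℂ (G → ℂ), L' ≤ L → (∀ h : G, ∀ f ∈ L', Tw G h f ∈ L') →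
      L' ≠ ⊥ → L' = L) :
    ∃ (n : ℕ) (ρ : Representation ℂ G (Fin n → ℂ)) (lam : (Fin n → ℂ) →ₗ[ℂ] ℂ),
      (∀ U : Submodule ℂ (Fin n → ℂ), (∀ g : G, ∀ v ∈ U, ρ g v ∈ U) → U = ⊥ ∨ U = ⊤) ∧
      (∃ g : G, ρ g ≠ 1) ∧ lam ≠ 0 ∧
      L = LinearMap.range (Fmap ρ lam) := by
  let e : L ≃ₗ[ℂ] (Fin (Module.finrank ℂ L) → ℂ) := (Module.finBasis ℂ L).equivFun
  let ρ := (twRep L hK hT).conj e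
  let lam := (negAvg G ∘ₗ L.subtype) ∘ₗ e.symm.toLinearMap
  have hFmap : Fmap ρ lam = L.subtype ∘ₗ e.symm.toLinearMap := by
    rw [Fmap_conj, Fmap_twRep_negAvg]
  have hrange : L = LinearMap.range (Fmap ρ lam) := by
    rw [hFmap, LinearMap.range_comp, LinearEquiv.range,
      Submodule.map_top, Submodule.range_subtype]
  have hF : Fmap ρ lam ≠ 0 := fun h => hne (by rw [hrange, h, LinearMap.range_zero])
  refine ⟨_, ρ, lam, (twRep_onlyTrivialInvariantSubmodules L hK hT hmin).conj e, ?_, ?_, hrange⟩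
  · by_contra! hρ
    exact hF (Fmap_eq_zero_of_forall_eq_one hρ lam)
  · intro hlam
    exact hF (hlam ▸ Fmap_zero_right ρ)
end
end

section
/- Let H be a Hopf algebra over a field k and let c ∈ H be a central element. For a linear functional φ : H → k set x_φ = Σ φ(c₍₁₎) c₍₂₎ − φ(c)·1 ∈ H. Then x_φ ∈ ker ε, and for every h ∈ H the left adjoint action satisfies ad_h(x_φ) = x_ψ, where ψ : H → k is the linear functional ψ(y) = Σ φ( S(h₍₁₎) · y · h₍₂₎ ). -/
/-!
Put `D = Δc`, so that `x_φ = (φ ⊗ id) D - φ(c) • 1`; as `c` is central, `D` commutes with `Δ(H)`.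
In the convolution algebra of linear maps `H → H ⊗ H` one has `Δ = ι₁ * ι₂` for the algebra maps
`ι₁ h = h ⊗ 1` and `ι₂ h = 1 ⊗ h`, hence `(ι₁ ∘ S) * Δ = ι₂` and `Δ * (ι₂ ∘ S) = ι₁`. Inserting
these and moving `D` across `Δ` gives `Σ (1 ⊗ h₁) D (1 ⊗ S h₂) = Σ (S h₁ ⊗ 1) D (h₂ ⊗ 1)`.
Applying `φ ⊗ id`, the left side becomes `ad_h ((φ ⊗ id) D)` and the right side `(ψ ⊗ id) D`;
the scalar parts agree because `ψ(c) = ε(h) φ(c)`.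
-/

open TensorProduct Coalgebra HopfAlgebra

noncomputable section

variable (k : Type*) (H : Type*) [Field k] [Ring H] [HopfAlgebra k H]

/-- The left adjoint action as a linear map `H ⊗ H → H`, `h ⊗ x ↦ Σ h₍₁₎ x S(h₍₂₎)`. -/
def adMap : H ⊗[k] H →ₗ[k] H :=
  LinearMap.mul' k H ∘ₗ
  LinearMap.lTensor H (LinearMap.mul' k H) ∘ₗ
  LinearMap.lTensor H (TensorProduct.comm k H H).toLinearMap ∘ₗ
  LinearMap.lTensor H (LinearMap.rTensor H (antipode (R := k))) ∘ₗ
  (TensorProduct.assoc k H H H).toLinearMap ∘ₗ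
  LinearMap.rTensor H (comul : H →ₗ[k] H ⊗[k] H)

/-- The map `H ⊗ H → H`, `h ⊗ y ↦ Σ S(h₍₁₎) y h₍₂₎`. -/
def adRMap : H ⊗[k] H →ₗ[k] H :=
  LinearMap.mul' k H ∘ₗ
  LinearMap.lTensor H (LinearMap.mul' k H) ∘ₗ
  LinearMap.rTensor (H ⊗[k] H) (antipode (R := k)) ∘ₗ
  LinearMap.lTensor H (TensorProduct.comm k H H).toLinearMap ∘ₗ
  (TensorProduct.assoc k H H H).toLinearMap ∘ₗ
  LinearMap.rTensor H (comul : H →ₗ[k] H ⊗[k] H)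

/-- The element `x_φ = Σ φ(c₍₁₎) c₍₂₎ − φ(c)·1`. -/
def xOf (φ : H →ₗ[k] k) (c : H) : H :=
  ((TensorProduct.lid k H).toLinearMap ∘ₗ LinearMap.rTensor H φ ∘ₗ
    (comul : H →ₗ[k] H ⊗[k] H) - (Algebra.linearMap k H) ∘ₗ φ) c

variable {k H}

open WithConv LinearMap Algebra.TensorProduct

section Convolution

variable {R C A : Type*} [CommSemiring R] [AddCommMonoid C] [Module R C] [Coalgebra R C]
  [Semiring A] [Algebra R A]

lemma mulRight_comp_convMul (d : A) (f g : C →ₗ[R] A) :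
    toConv (mulRight R d ∘ₗ f) * toConv g = toConv f * toConv (mulLeft R d ∘ₗ g) := by
  ext c; simp [(ℛ R c).convMul_apply, mul_assoc]

lemma mulLeft_comp_convMul (d : A) (f g : C →ₗ[R] A) :
    toConv (mulLeft R d ∘ₗ (toConv f * toConv g).ofConv) =
      toConv (mulLeft R d ∘ₗ f) * toConv g := by
  ext c; simp [(ℛ R c).convMul_apply, mul_assoc]

end Convolution

lemma lid_rTensor_one_tmul_mul_mul_one_tmul {R A B : Type*} [CommSemiring R] [Semiring A]
    [Algebra R A] [Semiring B] [Algebra R B] (φ : B →ₗ[R] R) (a a' : A) (t : B ⊗[R] A) :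
    TensorProduct.lid R A (rTensor A φ ((1 ⊗ₜ a) * t * (1 ⊗ₜ a'))) =
      a * TensorProduct.lid R A (rTensor A φ t) * a' := by
  induction t using TensorProduct.induction_on with
  | zero => simp
  | tmul b x => simp [mul_assoc]
  | add t t' ht ht' => simp only [mul_add, add_mul, map_add, ht, ht']

lemma counit_lid_rTensor_comul {R C : Type*} [CommSemiring R] [AddCommMonoid C] [Module R C]
    [Coalgebra R C] (φ : C →ₗ[R] R) (c : C) :
    counit (TensorProduct.lid R C (rTensor C φ (comul c))) = φ c := by
  have h : counit ∘ₗ (TensorProduct.lid R C).toLinearMap ∘ₗ rTensor C φ =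
      φ ∘ₗ (TensorProduct.rid R C).toLinearMap ∘ₗ lTensor C counit := by
    ext; simp [mul_comm]
  simpa using congr($h (comul c))

section HopfConvolution

variable {R H : Type*} [CommSemiring R] [Semiring H] [HopfAlgebra R H]

lemma algHom_comp_antipode_convMul_self {B : Type*} [Semiring B] [Algebra R B] (f : H →ₐ[R] B) :
    toConv (f.toLinearMap ∘ₗ antipode R) * toConv f.toLinearMap = 1 := by
  ext c
  simp [(ℛ R c).convMul_apply, ← map_mul, ← map_sum, sum_antipode_mul_eq_algebraMap_counit]

lemma algHom_convMul_comp_antipode {B : Type*} [Semiring B] [Algebra R B] (f : H →ₐ[R] B) :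
    toConv f.toLinearMap * toConv (f.toLinearMap ∘ₗ antipode R) = 1 := by
  ext c
  simp [(ℛ R c).convMul_apply, ← map_mul, ← map_sum, sum_mul_antipode_eq_algebraMap_counit]

lemma includeLeft_convMul_includeRight :
    toConv (includeLeft.toLinearMap : H →ₗ[R] H ⊗[R] H) * toConv includeRight.toLinearMap =
      toConv (comul (R := R) (A := H)) := by
  ext c; simp [(ℛ R c).convMul_apply, ← (ℛ R c).eq]

lemma includeLeft_comp_antipode_convMul_comul :
    toConv ((includeLeft.toLinearMap : H →ₗ[R] H ⊗[R] H) ∘ₗ antipode R) * toConv comul =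
      toConv includeRight.toLinearMap := by
  rw [← includeLeft_convMul_includeRight, ← mul_assoc, algHom_comp_antipode_convMul_self, one_mul]

lemma comul_convMul_includeRight_comp_antipode :
    toConv (comul (R := R) (A := H)) * toConv (includeRight.toLinearMap ∘ₗ antipode R) =
      toConv includeLeft.toLinearMap := by
  rw [← includeLeft_convMul_includeRight, mul_assoc, algHom_convMul_comp_antipode, mul_one]

lemma conj_includeRight_eq_conj_includeLeft {D : H ⊗[R] H}
    (hD : ∀ x : H, Commute (comul (R := R) x) D) :
    toConv (mulRight R D ∘ₗ includeRight.toLinearMap) *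
        toConv (includeRight.toLinearMap ∘ₗ antipode R) =
      toConv (mulRight R D ∘ₗ includeLeft.toLinearMap ∘ₗ antipode R) *
        toConv includeLeft.toLinearMap := by
  have hD' : mulRight R D ∘ₗ comul = mulLeft R D ∘ₗ comul := LinearMap.ext fun x => hD x
  calc _ = toConv includeRight.toLinearMap *
          toConv (mulLeft R D ∘ₗ includeRight.toLinearMap ∘ₗ antipode R) :=
        mulRight_comp_convMul ..
    _ = toConv (includeLeft.toLinearMap ∘ₗ antipode R) *
          (toConv (mulRight R D ∘ₗ comul) * toConv (includeRight.toLinearMap ∘ₗ antipode R)) := by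
        rw [← includeLeft_comp_antipode_convMul_comul, mul_assoc, mulRight_comp_convMul]
    _ = toConv (includeLeft.toLinearMap ∘ₗ antipode R) *
          toConv (mulLeft R D ∘ₗ includeLeft.toLinearMap) := by
        rw [hD', ← mulLeft_comp_convMul, toConv_ofConv, comul_convMul_includeRight_comp_antipode]
    _ = _ := (mulRight_comp_convMul ..).symm

end HopfConvolution

lemma xOf_eq (φ : H →ₗ[k] k) (c : H) :
    xOf k H φ c = TensorProduct.lid k H (rTensor H φ (comul c)) - φ c • 1 := by
  simp [xOf, Algebra.algebraMap_eq_smul_one]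

lemma adMap_tmul {ι : Type*} {h : H} (r : Repr k h ι) (x : H) :
    adMap k H (h ⊗ₜ x) = ∑ i ∈ r.index, r.left i * x * antipode k (r.right i) := by
  simp [adMap, ← r.eq, sum_tmul, mul_assoc]

lemma adRMap_tmul {ι : Type*} {h : H} (r : Repr k h ι) (y : H) :
    adRMap k H (h ⊗ₜ y) = ∑ i ∈ r.index, antipode k (r.left i) * y * r.right i := by
  simp [adRMap, ← r.eq, sum_tmul, mul_assoc]

lemma adMap_tmul_one (h : H) : adMap k H (h ⊗ₜ 1) = counit (R := k) h • 1 := by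
  simpa [adMap_tmul (ℛ k h)] using sum_mul_antipode_eq_smul (ℛ k h)

lemma adRMap_tmul_of_forall_mul_comm {c : H} (hc : ∀ x : H, c * x = x * c) (h : H) :
    adRMap k H (h ⊗ₜ c) = counit (R := k) h • c := by
  calc _ = ∑ i ∈ (ℛ k h).index, antipode k ((ℛ k h).left i) * (ℛ k h).right i * c := by
        rw [adRMap_tmul (ℛ k h)]
        exact Finset.sum_congr rfl fun i _ => by rw [mul_assoc, hc, mul_assoc]
    _ = counit (R := k) h • c := by
        rw [← Finset.sum_mul, sum_antipode_mul_eq_smul, smul_one_mul]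

lemma adMap_tmul_lid_rTensor (φ : H →ₗ[k] k) (h : H) (t : H ⊗[k] H) :
    adMap k H (h ⊗ₜ TensorProduct.lid k H (rTensor H φ t)) =
      TensorProduct.lid k H (rTensor H φ
        ((toConv (mulRight k t ∘ₗ includeRight.toLinearMap) *
          toConv (includeRight.toLinearMap ∘ₗ antipode k) : WithConv (H →ₗ[k] H ⊗[k] H)) h)) := by
  simp [adMap_tmul (ℛ k h), (ℛ k h).convMul_apply, lid_rTensor_one_tmul_mul_mul_one_tmul]

lemma rTensor_adRMap_comp_mk (h : H) (t : H ⊗[k] H) :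
    rTensor H (adRMap k H ∘ₗ mk k H H h) t =
      (toConv (mulRight k t ∘ₗ includeLeft.toLinearMap ∘ₗ antipode k) *
        toConv includeLeft.toLinearMap : WithConv (H →ₗ[k] H ⊗[k] H)) h := by
  rw [(ℛ k h).convMul_apply]
  induction t using TensorProduct.induction_on with
  | zero => simp
  | tmul a b => simp [adRMap_tmul (ℛ k h), sum_tmul]
  | add t t' ht ht' => simp [ht, ht', mul_add, add_mul, Finset.sum_add_distrib]

/-- `x_φ ∈ ker ε`, and `ad_h(x_φ) = x_ψ` where `ψ(y) = Σ φ(S(h₍₁₎) y h₍₂₎)`. -/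
theorem stmt14 (c : H) (hc : ∀ x : H, c * x = x * c) (φ : H →ₗ[k] k) :
    counit (R := k) (xOf k H φ c) = 0 ∧
    ∀ h : H, adMap k H (h ⊗ₜ[k] xOf k H φ c) =
      xOf k H (φ ∘ₗ adRMap k H ∘ₗ TensorProduct.mk k H H h) c := by
  have hcomul : ∀ x : H, Commute (comul (R := k) x) (comul c) := fun x => by
    rw [Commute, SemiconjBy, ← Bialgebra.comul_mul, ← Bialgebra.comul_mul, hc x]
  refine ⟨by simp [xOf_eq, counit_lid_rTensor_comul], fun h => ?_⟩
  rw [xOf_eq, xOf_eq, tmul_sub, map_sub, tmul_smul, map_smul, adMap_tmul_one,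
    adMap_tmul_lid_rTensor, conj_includeRight_eq_conj_includeLeft hcomul,
    ← rTensor_adRMap_comp_mk, ← rTensor_comp_apply, comp_apply, comp_apply, mk_apply,
    adRMap_tmul_of_forall_mul_comm hc, map_smul, smul_smul, smul_eq_mul, mul_comm]

end
end
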